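/- Let $(H,I)$ be a Dorroh pair of bialgebras, i.e., $(H,I)$ is both a Dorroh pair of algebras and of coalgebras and $H\ltimes_d I$ is a bialgebra. Suppose $H$ is a Hopf algebra with antipode $S_H$, and suppose there exists a linear map $S_I:I\to I$ such that for all $x\in I$: $\sum S_H(x_{(-1)})x_{(0)}+\sum S_I(x_{(0)})x_{(1)}+\sum S_I(x_1)x_2=0$ and $\sum x_{(-1)}S_I(x_{(0)})+\sum x_{(0)}S_H(x_{(1)})+\sum x_1S_I(x_2)=0$. Then $H\ltimes_d I$ is a Hopf algebra with antipode $S(h,x)=(S_H(h),S_I(x))$. -/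

import Mathlib

open TensorProduct

/-- Coassociativity of a (not necessarily counital) comultiplication. -/
def Coassoc {k : Type*} [Field k] {V : Type*} [AddCommGroup V] [Module k V]
    (d : V →ₗ[k] V ⊗[k] V) : Prop :=
  (TensorProduct.assoc k V V V).toLinearMap ∘ₗ TensorProduct.map d LinearMap.id ∘ₗ d
    = TensorProduct.map LinearMap.id d ∘ₗ d

/-- The Dorroh comultiplication on `H × I` for a Dorroh pair of coalgebras `(H, I)`. -/
noncomputable def dorrohComul {k : Type*} [Field k] {H I : Type*} [AddCommGroup H] [Module k H]
    [AddCommGroup I] [Module k I]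
    (dH : H →ₗ[k] H ⊗[k] H) (dI : I →ₗ[k] I ⊗[k] I)
    (ρl : I →ₗ[k] H ⊗[k] I) (ρr : I →ₗ[k] I ⊗[k] H) :
    (H × I) →ₗ[k] (H × I) ⊗[k] (H × I) :=
  TensorProduct.map (LinearMap.inl k H I) (LinearMap.inl k H I) ∘ₗ dH ∘ₗ LinearMap.fst k H I
  + TensorProduct.map (LinearMap.inl k H I) (LinearMap.inr k H I) ∘ₗ ρl ∘ₗ LinearMap.snd k H I
  + TensorProduct.map (LinearMap.inr k H I) (LinearMap.inl k H I) ∘ₗ ρr ∘ₗ LinearMap.snd k H I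
  + TensorProduct.map (LinearMap.inr k H I) (LinearMap.inr k H I) ∘ₗ dI ∘ₗ LinearMap.snd k H I

/-- The Dorroh multiplication on `H × I`, as a bilinear map. -/
def dorrohMulL {k : Type*} [Field k] {H I : Type*} [AddCommGroup H] [Module k H]
    [AddCommGroup I] [Module k I]
    (mH : H →ₗ[k] H →ₗ[k] H) (mI : I →ₗ[k] I →ₗ[k] I)
    (l : H →ₗ[k] I →ₗ[k] I) (r : I →ₗ[k] H →ₗ[k] I) :
    (H × I) →ₗ[k] (H × I) →ₗ[k] H × I :=
  LinearMap.mk₂ k (fun p q => (mH p.1 q.1, l p.1 q.2 + r p.2 q.1 + mI p.2 q.2))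
    (by intro p p' q; simp [Prod.ext_iff, map_add, LinearMap.add_apply]; abel)
    (by intro c p q; simp [Prod.ext_iff, map_smul, LinearMap.smul_apply, smul_add])
    (by intro p q q'; simp [Prod.ext_iff, map_add, LinearMap.add_apply]; abel)
    (by intro c p q; simp [Prod.ext_iff, map_smul, LinearMap.smul_apply, smul_add])

/-- The induced multiplication on `A ⊗ A`: `(a ⊗ b)(c ⊗ d) = ac ⊗ bd`. -/
noncomputable def tensorMul {k : Type*} [Field k] {A : Type*} [AddCommGroup A] [Module k A]
    (m : A →ₗ[k] A →ₗ[k] A) : (A ⊗[k] A) →ₗ[k] (A ⊗[k] A) →ₗ[k] A ⊗[k] A :=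
  TensorProduct.homTensorHomMap (RingHom.id k) A A A A ∘ₗ TensorProduct.map m m

/-! The four summands of the Dorroh coproduct `Δ(h, x)` lie in the four blocks `H ⊗ H`, `H ⊗ I`,
`I ⊗ H`, `I ⊗ I` of `(H × I) ⊗ (H × I)`, and the Dorroh product maps the first block into `H`
and the other three into `I`. Hence `m ∘ (S ⊗ id) ∘ Δ` (and likewise `m ∘ (id ⊗ S) ∘ Δ`) splits
into `(S_H ⋆ id)(h) ∈ H` and the three-term sum of the hypothesis on `S_I` in `I`, which are
`ε(h) 1` and `0`. -/

section Dorroh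

variable {k : Type*} [Field k] {H I : Type*} [AddCommGroup H] [Module k H]
  [AddCommGroup I] [Module k I]
  (mH : H →ₗ[k] H →ₗ[k] H) (mI : I →ₗ[k] I →ₗ[k] I)
  (l : H →ₗ[k] I →ₗ[k] I) (r : I →ₗ[k] H →ₗ[k] I)
  (dH : H →ₗ[k] H ⊗[k] H) (dI : I →ₗ[k] I ⊗[k] I)
  (ρl : I →ₗ[k] H ⊗[k] I) (ρr : I →ₗ[k] I ⊗[k] H)
  (f₁ f₂ : H →ₗ[k] H) (g₁ g₂ : I →ₗ[k] I)

open LinearMap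

theorem dorrohComul_apply (h : H) (x : I) :
    dorrohComul dH dI ρl ρr (h, x) =
      map (inl k H I) (inl k H I) (dH h) + map (inl k H I) (inr k H I) (ρl x)
        + map (inr k H I) (inl k H I) (ρr x) + map (inr k H I) (inr k H I) (dI x) := by
  simp [dorrohComul]

theorem lift_dorrohMulL_comp_map_inl_inl :
    lift (dorrohMulL mH mI l r) ∘ₗ map (f₁.prodMap g₁) (f₂.prodMap g₂) ∘ₗ map (inl k H I) (inl k H I)
      = inl k H I ∘ₗ lift ((mH ∘ₗ f₁).compl₂ f₂) :=
  ext' fun a b => by simp [dorrohMulL]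

theorem lift_dorrohMulL_comp_map_inl_inr :
    lift (dorrohMulL mH mI l r) ∘ₗ map (f₁.prodMap g₁) (f₂.prodMap g₂) ∘ₗ map (inl k H I) (inr k H I)
      = inr k H I ∘ₗ lift ((l ∘ₗ f₁).compl₂ g₂) :=
  ext' fun a y => by simp [dorrohMulL]

theorem lift_dorrohMulL_comp_map_inr_inl :
    lift (dorrohMulL mH mI l r) ∘ₗ map (f₁.prodMap g₁) (f₂.prodMap g₂) ∘ₗ map (inr k H I) (inl k H I)
      = inr k H I ∘ₗ lift ((r ∘ₗ g₁).compl₂ f₂) :=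
  ext' fun y a => by simp [dorrohMulL]

theorem lift_dorrohMulL_comp_map_inr_inr :
    lift (dorrohMulL mH mI l r) ∘ₗ map (f₁.prodMap g₁) (f₂.prodMap g₂) ∘ₗ map (inr k H I) (inr k H I)
      = inr k H I ∘ₗ lift ((mI ∘ₗ g₁).compl₂ g₂) :=
  ext' fun y z => by simp [dorrohMulL]

theorem lift_dorrohMulL_map_prodMap_dorrohComul (h : H) (x : I) :
    lift (dorrohMulL mH mI l r)
        (map (f₁.prodMap g₁) (f₂.prodMap g₂) (dorrohComul dH dI ρl ρr (h, x)))
      = (lift ((mH ∘ₗ f₁).compl₂ f₂) (dH h),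
          lift ((l ∘ₗ f₁).compl₂ g₂) (ρl x) + lift ((r ∘ₗ g₁).compl₂ f₂) (ρr x)
            + lift ((mI ∘ₗ g₁).compl₂ g₂) (dI x)) := by
  have hHH := congr($(lift_dorrohMulL_comp_map_inl_inl mH mI l r f₁ f₂ g₁ g₂) (dH h))
  have hHI := congr($(lift_dorrohMulL_comp_map_inl_inr mH mI l r f₁ f₂ g₁ g₂) (ρl x))
  have hIH := congr($(lift_dorrohMulL_comp_map_inr_inl mH mI l r f₁ f₂ g₁ g₂) (ρr x))
  have hII := congr($(lift_dorrohMulL_comp_map_inr_inr mH mI l r f₁ f₂ g₁ g₂) (dI x))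
  simp only [coe_comp, Function.comp_apply] at hHH hHI hIH hII
  simp only [dorrohComul_apply, map_add, hHH, hHI, hIH, hII]
  ext <;> simp [add_assoc]

end Dorroh

theorem stmt15_general {k : Type*} [Field k] {H I : Type*} [AddCommGroup H] [Module k H]
    [AddCommGroup I] [Module k I]
    (mH : H →ₗ[k] H →ₗ[k] H) (oneH : H) (dH : H →ₗ[k] H ⊗[k] H) (εH : H →ₗ[k] k)
    (SH : H →ₗ[k] H)
    (mI : I →ₗ[k] I →ₗ[k] I) (dI : I →ₗ[k] I ⊗[k] I)
    (l : H →ₗ[k] I →ₗ[k] I) (r : I →ₗ[k] H →ₗ[k] I)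
    (ρl : I →ₗ[k] H ⊗[k] I) (ρr : I →ₗ[k] I ⊗[k] H)
    -- `H` is a Hopf algebra with antipode `SH`
    (hSH : ∀ a : H,
      TensorProduct.lift mH (TensorProduct.map SH LinearMap.id (dH a)) = εH a • oneH ∧
      TensorProduct.lift mH (TensorProduct.map LinearMap.id SH (dH a)) = εH a • oneH)
    -- the hypotheses on the linear endomorphism `S_I` of `I`:
    -- `∑ S_H(x₍₋₁₎)x₍₀₎ + ∑ S_I(x₍₀₎)x₍₁₎ + ∑ S_I(x₁)x₂ = 0`
    (SI : I →ₗ[k] I)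
    (hSI1 : ∀ x : I,
      TensorProduct.lift (l ∘ₗ SH) (ρl x) + TensorProduct.lift (r ∘ₗ SI) (ρr x)
        + TensorProduct.lift (mI ∘ₗ SI) (dI x) = 0)
    -- `∑ x₍₋₁₎S_I(x₍₀₎) + ∑ x₍₀₎S_H(x₍₁₎) + ∑ x₁S_I(x₂) = 0`
    (hSI2 : ∀ x : I,
      TensorProduct.lift (l.compl₂ SI) (ρl x) + TensorProduct.lift (r.compl₂ SH) (ρr x)
        + TensorProduct.lift (mI.compl₂ SI) (dI x) = 0) :
    -- then `H ⋉ I` is a Hopf algebra with antipode `S(h,x) = (S_H(h), S_I(x))`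
    ∀ p : H × I,
      TensorProduct.lift (dorrohMulL mH mI l r)
          (TensorProduct.map (SH.prodMap SI) LinearMap.id (dorrohComul dH dI ρl ρr p))
        = εH p.1 • (oneH, (0 : I)) ∧
      TensorProduct.lift (dorrohMulL mH mI l r)
          (TensorProduct.map LinearMap.id (SH.prodMap SI) (dorrohComul dH dI ρl ρr p))
        = εH p.1 • (oneH, (0 : I)) := by
  rintro ⟨h, x⟩
  obtain ⟨hSHl, hSHr⟩ := hSH h
  rw [← LinearMap.comp_apply, lift_comp_map] at hSHl hSHr
  rw [← LinearMap.prodMap_id, lift_dorrohMulL_map_prodMap_dorrohComul,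
    lift_dorrohMulL_map_prodMap_dorrohComul, hSHl, hSHr]
  simp only [LinearMap.compl₂_id, LinearMap.comp_id, hSI1, hSI2, Prod.smul_mk, smul_zero,
    and_self]

theorem stmt15 {k : Type*} [Field k] {H I : Type*} [AddCommGroup H] [Module k H]
    [AddCommGroup I] [Module k I]
    (mH : H →ₗ[k] H →ₗ[k] H) (oneH : H) (dH : H →ₗ[k] H ⊗[k] H) (εH : H →ₗ[k] k)
    (SH : H →ₗ[k] H)
    (mI : I →ₗ[k] I →ₗ[k] I) (dI : I →ₗ[k] I ⊗[k] I)
    (l : H →ₗ[k] I →ₗ[k] I) (r : I →ₗ[k] H →ₗ[k] I)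
    (ρl : I →ₗ[k] H ⊗[k] I) (ρr : I →ₗ[k] I ⊗[k] H)
    -- `(H, I)` is a Dorroh pair of algebras
    (hHassoc : ∀ a b c : H, mH (mH a b) c = mH a (mH b c))
    (hIassoc : ∀ x y z : I, mI (mI x y) z = mI x (mI y z))
    (hll : ∀ (a b : H) (x : I), l (mH a b) x = l a (l b x))
    (hrr : ∀ (x : I) (a b : H), r (r x a) b = r x (mH a b))
    (hlr : ∀ (a : H) (x : I) (b : H), r (l a x) b = l a (r x b))
    (ha1 : ∀ (a : H) (x y : I), l a (mI x y) = mI (l a x) y)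
    (ha2 : ∀ (x : I) (a : H) (y : I), mI (r x a) y = mI x (l a y))
    (ha3 : ∀ (x y : I) (a : H), r (mI x y) a = mI x (r y a))
    -- `(H, I)` is a Dorroh pair of coalgebras
    (hHco : Coassoc dH) (hIco : Coassoc dI)
    (hcl : (TensorProduct.assoc k H H I).toLinearMap ∘ₗ TensorProduct.map dH LinearMap.id ∘ₗ ρl
      = TensorProduct.map LinearMap.id ρl ∘ₗ ρl)
    (hcr : TensorProduct.map LinearMap.id dH ∘ₗ ρr
      = (TensorProduct.assoc k I H H).toLinearMap ∘ₗ TensorProduct.map ρr LinearMap.id ∘ₗ ρr)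
    (hcbi : TensorProduct.map LinearMap.id ρr ∘ₗ ρl
      = (TensorProduct.assoc k H I H).toLinearMap ∘ₗ TensorProduct.map ρl LinearMap.id ∘ₗ ρr)
    (hc1 : TensorProduct.map LinearMap.id ρr ∘ₗ dI
      = (TensorProduct.assoc k I I H).toLinearMap ∘ₗ TensorProduct.map dI LinearMap.id ∘ₗ ρr)
    (hc2 : (TensorProduct.assoc k H I I).toLinearMap ∘ₗ TensorProduct.map ρl LinearMap.id ∘ₗ dI
      = TensorProduct.map LinearMap.id dI ∘ₗ ρl)
    (hc3 : (TensorProduct.assoc k I H I).toLinearMap ∘ₗ TensorProduct.map ρr LinearMap.id ∘ₗ dI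
      = TensorProduct.map LinearMap.id ρl ∘ₗ dI)
    -- `H` is a Hopf algebra with antipode `SH`
    (hone : ∀ a : H, mH oneH a = a ∧ mH a oneH = a)
    (hεcounit : ∀ a : H,
      (TensorProduct.lid k H) (TensorProduct.map εH LinearMap.id (dH a)) = a ∧
      (TensorProduct.rid k H) (TensorProduct.map LinearMap.id εH (dH a)) = a)
    (hdHmul : ∀ a b : H, dH (mH a b) = tensorMul mH (dH a) (dH b))
    (hdHone : dH oneH = oneH ⊗ₜ[k] oneH)
    (hεHmul : ∀ a b : H, εH (mH a b) = εH a * εH b) (hεHone : εH oneH = 1)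
    (hSH : ∀ a : H,
      TensorProduct.lift mH (TensorProduct.map SH LinearMap.id (dH a)) = εH a • oneH ∧
      TensorProduct.lift mH (TensorProduct.map LinearMap.id SH (dH a)) = εH a • oneH)
    -- `H ⋉ I` is a bialgebra with identity `(1,0)` and counit `(h,x) ↦ εH h`
    (hAone : ∀ p : H × I,
      dorrohMulL mH mI l r (oneH, (0 : I)) p = p ∧ dorrohMulL mH mI l r p (oneH, (0 : I)) = p)
    (hAco : Coassoc (dorrohComul dH dI ρl ρr))
    (hAcounit : ∀ p : H × I,
      (TensorProduct.lid k (H × I)) (TensorProduct.map (εH ∘ₗ LinearMap.fst k H I) LinearMap.id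
        (dorrohComul dH dI ρl ρr p)) = p ∧
      (TensorProduct.rid k (H × I)) (TensorProduct.map LinearMap.id (εH ∘ₗ LinearMap.fst k H I)
        (dorrohComul dH dI ρl ρr p)) = p)
    (hAmul : ∀ p q : H × I,
      dorrohComul dH dI ρl ρr (dorrohMulL mH mI l r p q)
        = tensorMul (dorrohMulL mH mI l r) (dorrohComul dH dI ρl ρr p)
            (dorrohComul dH dI ρl ρr q))
    (hAεmul : ∀ p q : H × I, εH (dorrohMulL mH mI l r p q).1 = εH p.1 * εH q.1)
    (hAΔone : dorrohComul dH dI ρl ρr (oneH, (0 : I))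
      = (oneH, (0 : I)) ⊗ₜ[k] (oneH, (0 : I)))
    -- the hypotheses on the linear endomorphism `S_I` of `I`:
    -- `∑ S_H(x₍₋₁₎)x₍₀₎ + ∑ S_I(x₍₀₎)x₍₁₎ + ∑ S_I(x₁)x₂ = 0`
    (SI : I →ₗ[k] I)
    (hSI1 : ∀ x : I,
      TensorProduct.lift (l ∘ₗ SH) (ρl x) + TensorProduct.lift (r ∘ₗ SI) (ρr x)
        + TensorProduct.lift (mI ∘ₗ SI) (dI x) = 0)
    -- `∑ x₍₋₁₎S_I(x₍₀₎) + ∑ x₍₀₎S_H(x₍₁₎) + ∑ x₁S_I(x₂) = 0`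
    (hSI2 : ∀ x : I,
      TensorProduct.lift (l.compl₂ SI) (ρl x) + TensorProduct.lift (r.compl₂ SH) (ρr x)
        + TensorProduct.lift (mI.compl₂ SI) (dI x) = 0) :
    -- then `H ⋉ I` is a Hopf algebra with antipode `S(h,x) = (S_H(h), S_I(x))`
    ∀ p : H × I,
      TensorProduct.lift (dorrohMulL mH mI l r)
          (TensorProduct.map (SH.prodMap SI) LinearMap.id (dorrohComul dH dI ρl ρr p))
        = εH p.1 • (oneH, (0 : I)) ∧
      TensorProduct.lift (dorrohMulL mH mI l r)
          (TensorProduct.map LinearMap.id (SH.prodMap SI) (dorrohComul dH dI ρl ρr p))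
        = εH p.1 • (oneH, (0 : I)) :=
  stmt15_general mH oneH dH εH SH mI dI l r ρl ρr hSH SI hSI1 hSI2
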